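/- arXiv:1212.5614 — 4 statements merged into one kernel-verified Lean document; each statement's English description precedes it below -/
import Mathlib

section
/- Let F be a differentiable cumulative distribution function on [0,1] satisfying F(x) ≥ x for all x, F(x) ≤ Cx for all x for some constant C > 1, and F concave. Then for all x ∈ [0, 1/C], the density satisfies F'(x) ≥ (1 - Cx)/(1 - x). -/
theorem stmt_0_general (F F' : ℝ → ℝ) (C : ℝ) (hC : 1 < C)
    (hderiv : ∀ x ∈ Set.Icc (0:ℝ) 1, HasDerivAt F (F' x) x)
    (hF1 : F 1 = 1)
    (hconc : ConcaveOn ℝ (Set.Icc (0:ℝ) 1) F)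
    (hup : ∀ x ∈ Set.Icc (0:ℝ) 1, F x ≤ C * x) :
    ∀ x ∈ Set.Icc (0:ℝ) (1/C), (1 - C * x) / (1 - x) ≤ F' x := by
  rintro x ⟨hx0, hxC⟩
  have hx1 : x < 1 := hxC.trans_lt ((div_lt_one (by linarith)).mpr hC)
  have hxI : x ∈ Set.Icc (0:ℝ) 1 := ⟨hx0, hx1.le⟩
  have hchord : slope F x 1 ≤ F' x :=
    hconc.slope_le_of_hasDerivAt hxI (by norm_num) hx1 (hderiv x hxI)
  calc (1 - C * x) / (1 - x) ≤ (1 - F x) / (1 - x) := by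
        gcongr
        exact hup x hxI
    _ = slope F x 1 := by rw [slope_def_field, hF1]
    _ ≤ F' x := hchord

/-- A differentiable concave CDF `F` on `[0,1]` with `x ≤ F x ≤ C·x` (`C > 1`) has
derivative at least `(1 - C x)/(1 - x)` on `[0, 1/C]`. -/
theorem stmt_0 (F F' : ℝ → ℝ) (C : ℝ) (hC : 1 < C)
    (hderiv : ∀ x ∈ Set.Icc (0:ℝ) 1, HasDerivAt F (F' x) x)
    (hF0 : F 0 = 0) (hF1 : F 1 = 1)
    (hmono : MonotoneOn F (Set.Icc (0:ℝ) 1))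
    (hconc : ConcaveOn ℝ (Set.Icc (0:ℝ) 1) F)
    (hlow : ∀ x ∈ Set.Icc (0:ℝ) 1, x ≤ F x)
    (hup : ∀ x ∈ Set.Icc (0:ℝ) 1, F x ≤ C * x) :
    ∀ x ∈ Set.Icc (0:ℝ) (1/C), (1 - C * x) / (1 - x) ≤ F' x :=
  stmt_0_general F F' C hC hderiv hF1 hconc hup
end

section
/- Let F be a differentiable concave CDF on [0,1] with x ≤ F(x) ≤ Cx for a constant C > 1. Let Z = 1 - (C-1)·log(1/(1 - 1/C)) and let Ψ be the CDF on [0, 1/C] with density ξ(x) = Z⁻¹·(1 - Cx)/(1 - x). Then for every interval [a,b] ⊆ [0, 1/C], F(b) - F(a) ≥ Z·(Ψ(b) - Ψ(a)). -/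
open Set MeasureTheory intervalIntegral

/-!
Concavity puts the tangent slope at `x` above the chord slope to `(1, 1)`, so
`F' x ≥ (1 - F x) / (1 - x) ≥ (1 - C x) / (1 - x) = Z ξ(x)`, and integrating this over `[a, b]`
gives the claim. Since `log (1 + y) < y`, the constant `Z` is positive, which is what lets
`Z` cancel against the `Z⁻¹` in the density.
-/

lemma sub_one_mul_log_one_div_one_sub_inv_lt_one {C : ℝ} (hC : 1 < C) :
    (C - 1) * Real.log (1 / (1 - 1 / C)) < 1 := by
  have hC1 : 0 < C - 1 := by linarith
  have hy : 0 < 1 / (C - 1) := by positivity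
  have h_eq : 1 / (1 - 1 / C) = 1 + 1 / (C - 1) := by
    field_simp [hC1.ne', (show C ≠ 0 by linarith)]
    ring
  have h_log : Real.log (1 + 1 / (C - 1)) < 1 / (C - 1) := by
    linarith [Real.log_lt_sub_one_of_pos (by positivity) (by linarith : 1 < 1 + 1 / (C - 1)).ne']
  rw [h_eq]
  calc (C - 1) * Real.log (1 + 1 / (C - 1)) < (C - 1) * (1 / (C - 1)) :=
        mul_lt_mul_of_pos_left h_log hC1
    _ = 1 := by field_simp

lemma continuousOn_mul_one_sub_mul_div_one_sub (c C : ℝ) :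
    ContinuousOn (fun x : ℝ => c * (1 - C * x) / (1 - x)) (Iio 1) :=
  ContinuousOn.div (by fun_prop) (by fun_prop) fun _ hx => (sub_pos.2 hx).ne'

lemma ConcaveOn.one_sub_mul_div_one_sub_le_deriv {F : ℝ → ℝ} {C x : ℝ}
    (hconc : ConcaveOn ℝ (Icc 0 1) F) (hF1 : F 1 = 1) (hx : x ∈ Ico 0 1) (hFx : F x ≤ C * x)
    (hd : DifferentiableAt ℝ F x) : (1 - C * x) / (1 - x) ≤ deriv F x := by
  have hx1 : 0 < 1 - x := sub_pos.2 hx.2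
  calc (1 - C * x) / (1 - x) ≤ (F 1 - F x) / (1 - x) := by gcongr; linarith
    _ = slope F x 1 := (slope_def_field F x 1).symm
    _ ≤ deriv F x :=
      hconc.slope_le_deriv (Ico_subset_Icc_self hx) ⟨zero_le_one, le_rfl⟩ hx.2 hd

theorem stmt_1_general (F : ℝ → ℝ) (C : ℝ) (hC : 1 < C)
    (hdiff : DifferentiableOn ℝ F (Set.Icc (0:ℝ) 1))
    (hF1 : F 1 = 1)
    (hconc : ConcaveOn ℝ (Set.Icc (0:ℝ) 1) F)
    (hbounds : ∀ x ∈ Set.Icc (0:ℝ) 1, x ≤ F x ∧ F x ≤ C * x)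
    (Z : ℝ) (hZ : Z = 1 - (C - 1) * Real.log (1 / (1 - 1/C)))
    (Ψ : ℝ → ℝ)
    (hΨ : ∀ t ∈ Set.Icc (0:ℝ) (1/C), Ψ t = ∫ x in (0:ℝ)..t, Z⁻¹ * (1 - C*x) / (1 - x)) :
    ∀ a b : ℝ, 0 ≤ a → a ≤ b → b ≤ 1/C → Z * (Ψ b - Ψ a) ≤ F b - F a := by
  intro a b ha hab hb
  have hb1 : b < 1 := hb.trans_lt ((div_lt_one (by linarith)).2 hC)
  have hZ0 : 0 < Z := by linarith [sub_one_mul_log_one_div_one_sub_inv_lt_one hC]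
  have hdensity : ContinuousOn (fun x => Z⁻¹ * (1 - C * x) / (1 - x)) (Icc 0 b) :=
    (continuousOn_mul_one_sub_mul_div_one_sub Z⁻¹ C).mono fun x hx => hx.2.trans_lt hb1
  have hΨab : Ψ b - Ψ a = ∫ x in a..b, Z⁻¹ * (1 - C * x) / (1 - x) := by
    have hint : ∀ t ∈ Icc 0 b, IntervalIntegrable (fun x => Z⁻¹ * (1 - C * x) / (1 - x))
        volume 0 t := fun t ht =>
      (hdensity.mono (Icc_subset_Icc_right ht.2)).intervalIntegrable_of_Icc ht.1
    rw [hΨ a ⟨ha, hab.trans hb⟩, hΨ b ⟨ha.trans hab, hb⟩,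
      integral_interval_sub_left (hint b ⟨ha.trans hab, le_rfl⟩) (hint a ⟨ha, hab⟩)]
  have hsub : Icc a b ⊆ Icc 0 1 := Icc_subset_Icc ha hb1.le
  have hdF : ∀ x ∈ Ioo a b, DifferentiableAt ℝ F x := fun x hx =>
    hdiff.differentiableAt (Icc_mem_nhds (ha.trans_lt hx.1) (hx.2.trans hb1))
  rw [hΨab, ← intervalIntegral.integral_const_mul]
  refine integral_le_sub_of_hasDeriv_right_of_le (g' := deriv F) hab
    (hdiff.continuousOn.mono hsub) (fun x hx => ?_) ((hdensity.mono (Icc_subset_Icc_left ha)).integrableOn_Icc.const_mul Z)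
    (fun x hx => ?_)
  · exact (hdF x hx).hasDerivAt.hasDerivWithinAt
  · have hx01 : x ∈ Icc (0:ℝ) 1 := hsub (Ioo_subset_Icc_self hx)
    rw [mul_div_assoc, mul_inv_cancel_left₀ hZ0.ne']
    exact hconc.one_sub_mul_div_one_sub_le_deriv hF1 ⟨hx01.1, hx.2.trans hb1⟩ (hbounds x hx01).2
      (hdF x hx)

/-- Minorization for concave Lipschitz distributions: for a differentiable concave CDF `F`
on `[0,1]` with `x ≤ F x ≤ C·x`, and `Ψ` the CDF on `[0,1/C]` with density
`ξ(x) = Z⁻¹ (1 - Cx)/(1 - x)` where `Z = 1 - (C-1) log(1/(1-1/C))`, we have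
`F(b) - F(a) ≥ Z (Ψ(b) - Ψ(a))` for every interval `[a,b] ⊆ [0,1/C]`. -/
theorem stmt_1 (F : ℝ → ℝ) (C : ℝ) (hC : 1 < C)
    (hdiff : DifferentiableOn ℝ F (Set.Icc (0:ℝ) 1))
    (hF0 : F 0 = 0) (hF1 : F 1 = 1)
    (hmono : MonotoneOn F (Set.Icc (0:ℝ) 1))
    (hconc : ConcaveOn ℝ (Set.Icc (0:ℝ) 1) F)
    (hbounds : ∀ x ∈ Set.Icc (0:ℝ) 1, x ≤ F x ∧ F x ≤ C * x)
    (Z : ℝ) (hZ : Z = 1 - (C - 1) * Real.log (1 / (1 - 1/C)))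
    (Ψ : ℝ → ℝ)
    (hΨ : ∀ t ∈ Set.Icc (0:ℝ) (1/C), Ψ t = ∫ x in (0:ℝ)..t, Z⁻¹ * (1 - C*x) / (1 - x)) :
    ∀ a b : ℝ, 0 ≤ a → a ≤ b → b ≤ 1/C → Z * (Ψ b - Ψ a) ≤ F b - F a :=
  stmt_1_general F C hC hdiff hF1 hconc hbounds Z hZ Ψ hΨ
end

section
/- Let π be a probability distribution with full support on {1,...,n}, and let B be drawn uniformly from the convex body B_π = {X ∈ ℝ^{n-1} : 0 ≤ X[i] ≤ min(1 - (π(i-1)/π(i))X[i-1], (π(i+1)/π(i))(1 - X[i+1])) for all i, with convention X[0] = X[n] = 0}. Then the sequence of coordinates B[1], B[2], ..., B[n-1] forms a Markov chain: for any 1 ≤ i ≤ n-2, constants a₁,...,aᵢ ∈ [0,1] and t ∈ [0,1], P[B[i+1] ≤ t | B[1] = a₁, ..., B[i] = aᵢ] = P[B[i+1] ≤ t | B[i] = aᵢ]. -/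
open MeasureTheory

/-- Coordinate `i ∈ {1,…,n-1}` of a super-diagonal vector `X ∈ ℝ^{n-1}`, with the
conventions `X[0] = X[n] = 0`. -/
def extCoord (m : ℕ) (X : Fin m → ℝ) (i : ℕ) : ℝ :=
  if h : 1 ≤ i ∧ i ≤ m then X ⟨i - 1, by omega⟩ else 0

/-- The super-diagonal parameterization `B_π ⊆ ℝ^{n-1}` of birth and death kernels
with stationary distribution `π`. -/
def BDSet (n : ℕ) (π : ℕ → ℝ) : Set (Fin (n-1) → ℝ) :=
  {X | ∀ i : ℕ, 1 ≤ i → i ≤ n - 1 →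
    0 ≤ extCoord (n-1) X i ∧
    extCoord (n-1) X i ≤ min (1 - π (i-1) / π i * extCoord (n-1) X (i-1))
                            (π (i+1) / π i * (1 - extCoord (n-1) X (i+1)))}

/-- The uniform (normalized Lebesgue) probability measure on `B_π`. -/
noncomputable def unifBD (n : ℕ) (π : ℕ → ℝ) : Measure (Fin (n-1) → ℝ) :=
  (volume (BDSet n π))⁻¹ • volume.restrict (BDSet n π)

/-!
Row `k` of the birth and death kernel involves only `X[k-1]` and `X[k]`, so the constraints on
`X[1..i]` and those on `X[i+1..n-1]` share only the coordinate `X[i]`: `B_π` is fibred over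
`X[1..i]` with a fibre that depends on `X[i]` alone. By Fubini, given `B[1..i]` the remaining
coordinates are uniform on that fibre, so `P[B[i+1] ≤ t | B[1..i]]` is a function of `B[i]`, and
the tower property identifies it with `P[B[i+1] ≤ t | B[i]]`.
-/

open Set Function
open scoped ENNReal

theorem ENNReal.ofReal_toReal_div_mul {a b : ℝ≥0∞} (hab : a ≤ b) (hb : b ≠ ∞) :
    ENNReal.ofReal (a / b).toReal * b = a := by
  rcases eq_or_ne b 0 with rfl | hb0
  · simp [nonpos_iff_eq_zero.mp hab]
  rw [ENNReal.ofReal_toReal (ENNReal.div_ne_top (ne_top_of_le_ne_top hb hab) hb0),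
    ENNReal.div_mul_cancel hb0 hb]

theorem dependsOn_mem_inter {ι : Type*} {α : ι → Type*} {U V : Set (Π i, α i)} {s : Set ι}
    (hU : DependsOn (· ∈ U) s) (hV : DependsOn (· ∈ V) s) : DependsOn (· ∈ U ∩ V) s :=
  fun _ _ h => congrArg₂ And (hU h) (hV h)

theorem MeasureTheory.condExp_ae_eq_condExp_of_le {α : Type*} {m₁ m₂ m₀ : MeasurableSpace α}
    {μ : Measure α} [IsFiniteMeasure μ] {f : α → ℝ} (h₁₂ : m₁ ≤ m₂) (h₂ : m₂ ≤ m₀)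
    (hf : AEStronglyMeasurable[m₁] (μ[f | m₂]) μ) : μ[f | m₁] =ᵐ[μ] μ[f | m₂] :=
  (condExp_condExp_of_le h₁₂ h₂).symm.trans
    (condExp_of_aestronglyMeasurable' (h₁₂.trans h₂) hf integrable_condExp)

theorem MeasureTheory.Measure.prod_apply_eq_setLIntegral_of_slice {α β : Type*}
    [MeasurableSpace α] [MeasurableSpace β] {μ : Measure α} {ν : Measure β} [SFinite μ]
    [SFinite ν] {S S' : Set (α × β)} (hS : MeasurableSet S) (hS' : MeasurableSet S')
    (hS'S : S' ⊆ S) {r : α → ℝ≥0∞} (hr : Measurable r)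
    (h : ∀ z ∈ S, r z.1 * ν (Prod.mk z.1 ⁻¹' S) = ν (Prod.mk z.1 ⁻¹' S')) :
    μ.prod ν S' = ∫⁻ z in S, r z.1 ∂μ.prod ν := by
  rw [Measure.prod_apply hS', ← lintegral_indicator hS,
    lintegral_prod _
      ((Measurable.indicator (f := fun z : α × β => r z.1) (by fun_prop) hS).aemeasurable)]
  refine lintegral_congr fun p => ?_
  have hslice : ∫⁻ q, S.indicator (fun z => r z.1) (p, q) ∂ν = r p * ν (Prod.mk p ⁻¹' S) := by
    rw [← lintegral_indicator_const (measurable_prodMk_left hS)]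
    rfl
  rw [hslice]
  rcases (Prod.mk p ⁻¹' S).eq_empty_or_nonempty with hp | ⟨q, hq⟩
  · have hp' : Prod.mk p ⁻¹' S' = ∅ := subset_empty_iff.mp (hp ▸ preimage_mono hS'S)
    rw [hp, hp', measure_empty, mul_zero]
  · exact (h (p, q) hq).symm

section extCoord

variable {m : ℕ} (X : Fin m → ℝ)

@[simp] theorem extCoord_zero : extCoord m X 0 = 0 := by simp [extCoord]

theorem extCoord_of_lt {k : ℕ} (hk : m < k) : extCoord m X k = 0 := dif_neg (by omega)

@[simp] theorem extCoord_succ (j : Fin m) : extCoord m X (j.val + 1) = X j :=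
  dif_pos ⟨by omega, j.isLt⟩

theorem dependsOn_extCoord (k : ℕ) :
    DependsOn (fun X : Fin m → ℝ => extCoord m X k) {j | j.val + 1 = k} := by
  intro X Y h
  rcases Nat.eq_zero_or_pos k with rfl | hk
  · simp
  by_cases hkm : k ≤ m
  · obtain ⟨j, rfl⟩ : ∃ j : Fin m, k = j.val + 1 := ⟨⟨k - 1, by omega⟩, (Nat.sub_add_cancel hk).symm⟩
    simpa using h j rfl
  · simp [extCoord_of_lt _ (not_le.mp hkm)]

@[fun_prop] theorem measurable_extCoord (k : ℕ) :
    Measurable fun X : Fin m → ℝ => extCoord m X k := by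
  unfold extCoord
  split_ifs
  · exact measurable_pi_apply _
  · exact measurable_const

theorem measurable_extCoord_comap_firstCoords {m i : ℕ} (hi : 0 < i) :
    Measurable[MeasurableSpace.comap (fun X (j : Fin i) => extCoord m X (j.1 + 1)) inferInstance]
      (fun X => extCoord m X i) := by
  have : (fun X => extCoord m X i) =
      (fun v : Fin i → ℝ => v ⟨i - 1, by omega⟩) ∘
        fun X (j : Fin i) => extCoord m X (j.1 + 1) := by
    ext X; simp [Nat.sub_add_cancel hi]
  rw [this]
  exact (measurable_pi_apply _).comp (comap_measurable _)

end extCoord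

instance (n : ℕ) (π : ℕ → ℝ) : IsFiniteMeasure (unifBD n π) :=
  ⟨by simpa [unifBD] using (ENNReal.inv_mul_le_one _).trans_lt ENNReal.one_lt_top⟩

section splitAt

variable {m i : ℕ}

/-- `j : Fin m` stands for the coordinate `X[j+1]`, so this is `X ↦ (X[1..i], X[i+1..m])`. -/
abbrev splitAt (m i : ℕ) :
    (Fin m → ℝ) ≃ᵐ ({j : Fin m // j.val < i} → ℝ) × ({j : Fin m // ¬ j.val < i} → ℝ) :=
  MeasurableEquiv.piEquivPiSubtypeProd (fun _ => ℝ) (fun j : Fin m => j.val < i)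

theorem splitAt_symm_apply_of_lt
    (z : ({j : Fin m // j.val < i} → ℝ) × ({j : Fin m // ¬ j.val < i} → ℝ))
    {j : Fin m} (hj : j.val < i) :
    (splitAt m i).symm z j = z.1 ⟨j, hj⟩ := by
  simp [hj]

theorem splitAt_symm_apply_of_not_lt
    (z : ({j : Fin m // j.val < i} → ℝ) × ({j : Fin m // ¬ j.val < i} → ℝ))
    {j : Fin m} (hj : ¬ j.val < i) :
    (splitAt m i).symm z j = z.2 ⟨j, hj⟩ := by
  simp [hj]

/-- The slice of `U` over the left part `(c, …, c)`; when `U` is determined by `X[i..m]`, only its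
last entry `X[i] = c` matters. -/
def rightSlice (m i : ℕ) (U : Set (Fin m → ℝ)) (c : ℝ) : Set ({j : Fin m // ¬ j.val < i} → ℝ) :=
  {q | (splitAt m i).symm (fun _ => c, q) ∈ U}

theorem measurable_volume_rightSlice {U : Set (Fin m → ℝ)} (hU : MeasurableSet U) :
    Measurable fun c => volume (rightSlice m i U c) :=
  measurable_measure_prodMk_left (hU.preimage (by fun_prop :
    Measurable fun z : ℝ × ({j : Fin m // ¬ j.val < i} → ℝ) =>
      (splitAt m i).symm (fun _ => z.1, z.2)))

theorem extCoord_splitAt_symm (hi : 0 < i) (him : i ≤ m)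
    (z : ({j : Fin m // j.val < i} → ℝ) × ({j : Fin m // ¬ j.val < i} → ℝ)) :
    extCoord m ((splitAt m i).symm z) i = z.1 ⟨⟨i - 1, by omega⟩, Nat.sub_one_lt_of_lt hi⟩ := by
  have := extCoord_succ ((splitAt m i).symm z) ⟨i - 1, by omega⟩
  rwa [Nat.sub_add_cancel hi, splitAt_symm_apply_of_lt] at this

theorem preimage_prodMk_splitAt_symm_inter (hi : 0 < i) (him : i ≤ m) {V U : Set (Fin m → ℝ)}
    (hV : DependsOn (· ∈ V) {j : Fin m | j.val < i})
    (hU : DependsOn (· ∈ U) {j : Fin m | i ≤ j.val + 1})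
    {z : ({j : Fin m // j.val < i} → ℝ) × ({j : Fin m // ¬ j.val < i} → ℝ)}
    (hz : (splitAt m i).symm z ∈ V) :
    Prod.mk z.1 ⁻¹' ((splitAt m i).symm ⁻¹' (V ∩ U)) =
      rightSlice m i U (z.1 ⟨⟨i - 1, by omega⟩, Nat.sub_one_lt_of_lt hi⟩) := by
  ext q
  have hqV : (splitAt m i).symm (z.1, q) ∈ V ↔ (splitAt m i).symm z ∈ V := by
    refine iff_of_eq (hV fun j hj => ?_)
    rw [splitAt_symm_apply_of_lt _ hj, splitAt_symm_apply_of_lt _ hj]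
  have hqU : (splitAt m i).symm (z.1, q) ∈ U ↔
      (splitAt m i).symm (fun _ => z.1 ⟨⟨i - 1, by omega⟩, Nat.sub_one_lt_of_lt hi⟩, q) ∈ U := by
    refine iff_of_eq (hU fun j hj => ?_)
    by_cases hji : j.val < i
    · rw [splitAt_symm_apply_of_lt _ hji, splitAt_symm_apply_of_lt _ hji]
      exact congrArg z.1
        (Subtype.ext (Fin.ext (by simp only [mem_ofPred_eq] at hj; show j.val = i - 1; omega)))
    · rw [splitAt_symm_apply_of_not_lt _ hji, splitAt_symm_apply_of_not_lt _ hji]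
  simp only [mem_preimage, mem_inter_iff, hqV, hz, true_and, hqU]
  rfl

end splitAt

namespace BDSet

variable {n : ℕ} {π : ℕ → ℝ} {i : ℕ}

/-- With `K[k,k+1] = X[k]` and, by detailed balance, `K[k,k-1] = π(k-1)/π(k) X[k-1]`, this says
that row `k` of `K` has nonnegative off-diagonal entries and a nonnegative diagonal entry. -/
def RowCondition (n : ℕ) (π : ℕ → ℝ) (k : ℕ) (X : Fin (n-1) → ℝ) : Prop :=
  0 ≤ extCoord (n-1) X k ∧ extCoord (n-1) X k ≤ 1 - π (k-1) / π k * extCoord (n-1) X (k-1)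

def head (n : ℕ) (π : ℕ → ℝ) (i : ℕ) : Set (Fin (n-1) → ℝ) :=
  {X | ∀ k, 0 < k → k ≤ i → RowCondition n π k X}

def tail (n : ℕ) (π : ℕ → ℝ) (i : ℕ) : Set (Fin (n-1) → ℝ) :=
  {X | (∀ k, i < k → k ≤ n - 1 → RowCondition n π k X) ∧ extCoord (n-1) X (n-1) ≤ π n / π (n-1)}

theorem eq_tail_zero (hn : 2 ≤ n) (hπ : ∀ j, 1 ≤ j → j ≤ n → 0 < π j) :
    BDSet n π = tail n π 0 := by
  ext X
  constructor
  · intro hX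
    refine ⟨fun k hk hkn => ⟨(hX k hk hkn).1, (hX k hk hkn).2.trans (min_le_left _ _)⟩, ?_⟩
    have h := (hX (n-1) (by omega) le_rfl).2.trans (min_le_right _ _)
    rwa [extCoord_of_lt X (by omega : n - 1 < n - 1 + 1), Nat.sub_add_cancel (by omega : 1 ≤ n),
      sub_zero, mul_one] at h
  · rintro ⟨hrow, hlast⟩ k hk hkn
    refine ⟨(hrow k hk hkn).1, le_min (hrow k hk hkn).2 ?_⟩
    rcases eq_or_lt_of_le hkn with rfl | hkn'
    · rwa [extCoord_of_lt X (by omega : n - 1 < n - 1 + 1), Nat.sub_add_cancel (by omega : 1 ≤ n),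
        sub_zero, mul_one]
    · have hnext := (hrow (k+1) (by omega) hkn').2
      rw [Nat.add_sub_cancel] at hnext
      have hπk : 0 < π k := hπ k hk (by omega)
      have hπk1 : 0 < π (k+1) := hπ (k+1) (by omega) (by omega)
      rw [div_mul_eq_mul_div, le_div_iff₀ hπk]
      have := (hrow k hk hkn).1
      -- the bound `π(k+1)/π(k) (1 - X[k+1])` on `X[k]` is the row condition at `k+1`
      field_simp at hnext
      nlinarith

theorem head_inter_tail (hin : i ≤ n - 1) : head n π i ∩ tail n π i = tail n π 0 := by
  ext X
  simp only [head, tail, mem_inter_iff, mem_ofPred_eq]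
  constructor
  · rintro ⟨hh, ht, hlast⟩
    exact ⟨fun k hk hkn => (le_or_gt k i).elim (hh k hk) fun hik => ht k hik hkn, hlast⟩
  · rintro ⟨ht, hlast⟩
    exact ⟨fun k hk hki => ht k hk (hki.trans hin), fun k hik hkn => ht k (by omega) hkn, hlast⟩

theorem measurable_rowCondition (k : ℕ) : Measurable (RowCondition n π k) :=
  (measurableSet_setOfPred.mp (measurableSet_le measurable_const (measurable_extCoord k))).and
    (measurableSet_setOfPred.mp (measurableSet_le (measurable_extCoord k) (by fun_prop)))

theorem measurableSet_head : MeasurableSet (head n π i) :=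
  measurableSet_setOfPred.mpr <| Measurable.forall fun k => measurable_const.imp <|
    measurable_const.imp (measurable_rowCondition k)

theorem measurableSet_tail : MeasurableSet (tail n π i) :=
  measurableSet_setOfPred.mpr <| (Measurable.forall fun k => measurable_const.imp <|
    measurable_const.imp (measurable_rowCondition k)).and
    (measurableSet_setOfPred.mp (measurableSet_le (measurable_extCoord _) measurable_const))

theorem dependsOn_mem_head : DependsOn (· ∈ head n π i) {j : Fin (n-1) | j.val < i} := by
  intro X Y h
  have hX : ∀ k ≤ i, extCoord (n-1) X k = extCoord (n-1) Y k := fun k hk =>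
    dependsOn_extCoord k fun j hj => h j (by simp only [mem_ofPred_eq] at hj ⊢; omega)
  refine propext <| forall_congr' fun k => imp_congr_right fun _ => imp_congr_right fun hki => ?_
  rw [RowCondition, RowCondition, hX k hki, hX (k-1) (by omega)]

theorem dependsOn_mem_tail (hin : i ≤ n - 1) :
    DependsOn (· ∈ tail n π i) {j : Fin (n-1) | i ≤ j.val + 1} := by
  intro X Y h
  have hX : ∀ k, i ≤ k → extCoord (n-1) X k = extCoord (n-1) Y k := fun k hk =>
    dependsOn_extCoord k fun j hj => h j (by simp only [mem_ofPred_eq] at hj ⊢; omega)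
  refine propext <| and_congr (forall_congr' fun k => imp_congr_right fun hik => ?_) ?_
  · refine imp_congr_right fun _ => ?_
    rw [RowCondition, RowCondition, hX k hik.le, hX (k-1) (by omega)]
  · rw [hX (n-1) hin]

theorem extCoord_mem_Icc_of_mem_tail (hπ : ∀ j, 1 ≤ j → j ≤ n → 0 < π j) {X : Fin (n-1) → ℝ}
    (hX : X ∈ tail n π i) (hXi : 0 ≤ extCoord (n-1) X i) {k : ℕ} (hik : i < k) (hkn : k ≤ n - 1) :
    extCoord (n-1) X k ∈ Icc 0 1 := by
  obtain ⟨hk0, hk1⟩ := hX.1 k hik hkn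
  refine ⟨hk0, hk1.trans (sub_le_self _ ?_)⟩
  rcases Nat.eq_zero_or_pos (k - 1) with hk | hk
  · simp [hk]
  have hprev : 0 ≤ extCoord (n-1) X (k-1) := by
    rcases eq_or_lt_of_le (Nat.le_sub_one_of_lt hik) with h | h
    · rwa [← h]
    · exact (hX.1 (k-1) h (by omega)).1
  exact mul_nonneg (div_pos (hπ _ hk (by omega)) (hπ k (by omega) (by omega))).le hprev

theorem rightSlice_tail_subset_Icc (hπ : ∀ j, 1 ≤ j → j ≤ n → 0 < π j) (hi : 0 < i)
    (hin : i ≤ n - 1) {c : ℝ} (hc : 0 ≤ c) :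
    rightSlice (n-1) i (tail n π i) c ⊆ Icc 0 1 := by
  intro q hq
  have hXi : 0 ≤ extCoord (n-1) ((splitAt (n-1) i).symm (fun _ => c, q)) i := by
    rwa [extCoord_splitAt_symm hi hin]
  have h : ∀ j, q j ∈ Icc 0 1 := fun j => by
    have h := extCoord_mem_Icc_of_mem_tail hπ hq hXi (k := j.val.val + 1)
      (by have := j.2; omega) (by have := j.val.isLt; omega)
    rwa [extCoord_succ, splitAt_symm_apply_of_not_lt _ j.2] at h
  exact ⟨fun j => (h j).1, fun j => (h j).2⟩

theorem volume_rightSlice_tail_lt_top (hπ : ∀ j, 1 ≤ j → j ≤ n → 0 < π j) (hi : 0 < i)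
    (hin : i ≤ n - 1) {c : ℝ} (hc : 0 ≤ c) :
    volume (rightSlice (n-1) i (tail n π i) c) < ∞ :=
  ((Metric.isBounded_Icc 0 1).subset (rightSlice_tail_subset_Icc hπ hi hin hc)).measure_lt_top

/-- For `T` determined by `X[i..n-1]`, the conditional probability of `T` given `X[1..i]` when
`X[i] = c`: given `X[1..i]`, the coordinates `X[i+1..n-1]` are uniform on the fibre
`rightSlice (tail n π i) c`. -/
noncomputable def tailCondProb (n : ℕ) (π : ℕ → ℝ) (i : ℕ) (T : Set (Fin (n-1) → ℝ)) (c : ℝ) :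
    ℝ :=
  (volume (rightSlice (n-1) i (tail n π i ∩ T) c) /
    volume (rightSlice (n-1) i (tail n π i) c)).toReal

theorem measurable_tailCondProb {T : Set (Fin (n-1) → ℝ)} (hT : MeasurableSet T) :
    Measurable (tailCondProb n π i T) :=
  ((measurable_volume_rightSlice (measurableSet_tail.inter hT)).div
    (measurable_volume_rightSlice measurableSet_tail)).ennreal_toReal

theorem tailCondProb_nonneg (T : Set (Fin (n-1) → ℝ)) (c : ℝ) : 0 ≤ tailCondProb n π i T c :=
  ENNReal.toReal_nonneg

theorem tailCondProb_le_one (T : Set (Fin (n-1) → ℝ)) (c : ℝ) : tailCondProb n π i T c ≤ 1 :=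
  ENNReal.toReal_le_of_le_ofReal zero_le_one <| by
    rw [ENNReal.ofReal_one]
    exact ENNReal.div_le_of_le_mul (by rw [one_mul]; exact measure_mono fun _ hq => hq.1)

theorem ofReal_tailCondProb_mul (hπ : ∀ j, 1 ≤ j → j ≤ n → 0 < π j) (hi : 0 < i)
    (hin : i ≤ n - 1) (T : Set (Fin (n-1) → ℝ)) {c : ℝ} (hc : 0 ≤ c) :
    ENNReal.ofReal (tailCondProb n π i T c) * volume (rightSlice (n-1) i (tail n π i) c) =
      volume (rightSlice (n-1) i (tail n π i ∩ T) c) :=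
  ENNReal.ofReal_toReal_div_mul (measure_mono fun _ hq => hq.1)
    (volume_rightSlice_tail_lt_top hπ hi hin hc).ne

theorem extCoord_nonneg_of_mem (hn : 2 ≤ n) (hπ : ∀ j, 1 ≤ j → j ≤ n → 0 < π j)
    {X : Fin (n-1) → ℝ} (hX : X ∈ BDSet n π) {k : ℕ} (hk : 0 < k) (hkn : k ≤ n - 1) :
    0 ≤ extCoord (n-1) X k := by
  rw [eq_tail_zero hn hπ] at hX
  exact (hX.1 k hk hkn).1

theorem volume_inter_eq_setLIntegral_tailCondProb (hπ : ∀ j, 1 ≤ j → j ≤ n → 0 < π j)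
    (hi : 0 < i) (hin : i ≤ n - 1) {s T : Set (Fin (n-1) → ℝ)} (hs : MeasurableSet s)
    (hT : MeasurableSet T) (hsi : DependsOn (· ∈ s) {j | j.val < i})
    (hTi : DependsOn (· ∈ T) {j | i ≤ j.val + 1}) :
    volume (s ∩ T ∩ BDSet n π) =
      ∫⁻ x in s ∩ BDSet n π, ENNReal.ofReal (tailCondProb n π i T (extCoord (n-1) x i)) := by
  have hn : 2 ≤ n := by omega
  have hB : BDSet n π = head n π i ∩ tail n π i := by
    rw [head_inter_tail hin, eq_tail_zero hn hπ]
  have hleft := dependsOn_mem_inter hsi (dependsOn_mem_head (π := π))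
  have hVm : MeasurableSet (s ∩ head n π i) := hs.inter measurableSet_head
  have hsB : s ∩ BDSet n π = s ∩ head n π i ∩ tail n π i := by rw [hB, inter_assoc]
  have hsTB : s ∩ T ∩ BDSet n π = s ∩ head n π i ∩ (tail n π i ∩ T) := by
    rw [hB]; ext; simp only [mem_inter_iff]; tauto
  set e := splitAt (n-1) i
  have hmp : MeasurePreserving e.symm volume volume :=
    (volume_preserving_piEquivPiSubtypeProd (fun _ : Fin (n-1) => ℝ) (fun j => j.val < i)).symm
  have hc : ∀ z ∈ e.symm ⁻¹' (s ∩ head n π i ∩ tail n π i),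
      0 ≤ z.1 ⟨⟨i - 1, by omega⟩, Nat.sub_one_lt_of_lt hi⟩ := fun z hz => by
    rw [← extCoord_splitAt_symm hi hin]
    have hz' : e.symm z ∈ s ∩ BDSet n π := hsB ▸ hz
    exact extCoord_nonneg_of_mem hn hπ hz'.2 hi hin
  rw [hsTB, ← hmp.measure_preimage (hVm.inter (measurableSet_tail.inter hT)).nullMeasurableSet,
    Measure.volume_eq_prod, Measure.prod_apply_eq_setLIntegral_of_slice
      (e.symm.measurable (hVm.inter measurableSet_tail))
      (e.symm.measurable (hVm.inter (measurableSet_tail.inter hT)))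
      (preimage_mono (inter_subset_inter_right _ inter_subset_left))
      (r := fun p =>
        ENNReal.ofReal (tailCondProb n π i T (p ⟨⟨i - 1, by omega⟩, Nat.sub_one_lt_of_lt hi⟩)))
      ((measurable_tailCondProb hT).comp (measurable_pi_apply _)).ennreal_ofReal]
  · rw [← Measure.volume_eq_prod, hsB, ← hmp.setLIntegral_comp_preimage
      (f := fun x => ENNReal.ofReal (tailCondProb n π i T (extCoord (n-1) x i)))
      (hVm.inter measurableSet_tail)
      ((measurable_tailCondProb hT).comp (measurable_extCoord i)).ennreal_ofReal]
    simp only [e, extCoord_splitAt_symm hi hin]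
  · intro z hz
    rw [preimage_prodMk_splitAt_symm_inter hi hin hleft (dependsOn_mem_tail hin) hz.1,
      preimage_prodMk_splitAt_symm_inter hi hin hleft
        (dependsOn_mem_inter (dependsOn_mem_tail hin) hTi) hz.1]
    exact ofReal_tailCondProb_mul hπ hi hin T (hc z hz)

theorem setIntegral_tailCondProb (hπ : ∀ j, 1 ≤ j → j ≤ n → 0 < π j)
    (hi : 0 < i) (hin : i ≤ n - 1) {s T : Set (Fin (n-1) → ℝ)} (hs : MeasurableSet s)
    (hT : MeasurableSet T) (hsi : DependsOn (· ∈ s) {j | j.val < i})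
    (hTi : DependsOn (· ∈ T) {j | i ≤ j.val + 1}) :
    ∫ x in s, tailCondProb n π i T (extCoord (n-1) x i) ∂unifBD n π =
      ∫ x in s, T.indicator (fun _ => (1 : ℝ)) x ∂unifBD n π := by
  have hg : Measurable fun x => tailCondProb n π i T (extCoord (n-1) x i) :=
    (measurable_tailCondProb hT).comp (measurable_extCoord i)
  rw [integral_eq_lintegral_of_nonneg_ae (ae_of_all _ fun _ => tailCondProb_nonneg T _)
      hg.aestronglyMeasurable,
    setIntegral_indicator hT, setIntegral_const, smul_eq_mul, mul_one, measureReal_def,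
    unifBD, Measure.restrict_smul, lintegral_smul_measure, Measure.restrict_restrict hs,
    Measure.smul_apply, Measure.restrict_apply (hs.inter hT), smul_eq_mul,
    volume_inter_eq_setLIntegral_tailCondProb hπ hi hin hs hT hsi hTi, smul_eq_mul]

theorem condExp_indicator_ae_eq_tailCondProb (hπ : ∀ j, 1 ≤ j → j ≤ n → 0 < π j)
    (hi : 0 < i) (hin : i ≤ n - 1) {T : Set (Fin (n-1) → ℝ)} (hT : MeasurableSet T)
    (hTi : DependsOn (· ∈ T) {j | i ≤ j.val + 1}) :
    (unifBD n π)[T.indicator (fun _ => (1 : ℝ)) |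
        MeasurableSpace.comap (fun X (j : Fin i) => extCoord (n-1) X (j.1 + 1)) inferInstance]
      =ᵐ[unifBD n π] fun X => tailCondProb n π i T (extCoord (n-1) X i) := by
  have hmeas : Measurable fun X (j : Fin i) => extCoord (n-1) X (j.1 + 1) := by fun_prop
  have hg : Measurable fun x => tailCondProb n π i T (extCoord (n-1) x i) :=
    (measurable_tailCondProb hT).comp (measurable_extCoord i)
  have hgm : Measurable[MeasurableSpace.comap (fun X (j : Fin i) => extCoord (n-1) X (j.1 + 1))
      inferInstance] fun x => tailCondProb n π i T (extCoord (n-1) x i) :=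
    (measurable_tailCondProb hT).comp (measurable_extCoord_comap_firstCoords hi)
  refine (ae_eq_condExp_of_forall_setIntegral_eq hmeas.comap_le
    ((integrable_const 1).indicator hT) (fun _ _ _ => ?_) (fun s hs _ => ?_)
    hgm.aestronglyMeasurable).symm
  · refine Integrable.integrableOn (.of_bound hg.aestronglyMeasurable 1 (ae_of_all _ fun _ => ?_))
    rw [Real.norm_eq_abs, abs_of_nonneg (tailCondProb_nonneg T _)]
    exact tailCondProb_le_one T _
  · obtain ⟨A, hA, rfl⟩ := hs
    refine setIntegral_tailCondProb hπ hi hin (hmeas hA) hT (fun X Y h => ?_) hTi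
    refine congrArg (· ∈ A) (funext fun j => dependsOn_extCoord _ fun j' hj' => h j' ?_)
    simp only [mem_ofPred_eq] at hj' ⊢
    omega

end BDSet

theorem stmt_2_general (n : ℕ) (π : ℕ → ℝ) (hπ : ∀ j, 1 ≤ j → j ≤ n → 0 < π j)
    (i : ℕ) (hi1 : 1 ≤ i) (hi2 : i ≤ n - 2)
    (t : ℝ) :
    (unifBD n π)[Set.indicator {X | extCoord (n-1) X (i+1) ≤ t} (fun _ => (1:ℝ)) |
        MeasurableSpace.comap (fun X (j : Fin i) => extCoord (n-1) X (j.1 + 1)) inferInstance]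
      =ᵐ[unifBD n π]
    (unifBD n π)[Set.indicator {X | extCoord (n-1) X (i+1) ≤ t} (fun _ => (1:ℝ)) |
        MeasurableSpace.comap (fun X => extCoord (n-1) X i) inferInstance] := by
  set T := {X : Fin (n-1) → ℝ | extCoord (n-1) X (i+1) ≤ t}
  have hT : MeasurableSet T := measurableSet_le (measurable_extCoord _) measurable_const
  have hTi : DependsOn (· ∈ T) {j | i ≤ j.val + 1} := fun X Y h =>
    congrArg (· ≤ t) <| dependsOn_extCoord _ fun j hj => h j <| by
      simp only [mem_ofPred_eq] at hj ⊢; omega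
  have hfirst := BDSet.condExp_indicator_ae_eq_tailCondProb hπ hi1 (by omega) hT hTi
  refine (condExp_ae_eq_condExp_of_le (measurable_extCoord_comap_firstCoords hi1).comap_le
    (by fun_prop : Measurable fun X (j : Fin i) => extCoord (n-1) X (j.1 + 1)).comap_le ?_).symm
  exact ((BDSet.measurable_tailCondProb hT).comp
    (comap_measurable _)).aestronglyMeasurable.congr hfirst.symm

/-- Markov property for the super-diagonal entries: for `B` uniform on `B_π`,
`P[B[i+1] ≤ t | B[1],…,B[i]] = P[B[i+1] ≤ t | B[i]]` (as conditional expectations of the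
indicator of `{B[i+1] ≤ t}`, almost everywhere). -/
theorem stmt_2 (n : ℕ) (hn : 3 ≤ n) (π : ℕ → ℝ) (hπ : ∀ j, 1 ≤ j → j ≤ n → 0 < π j)
    (i : ℕ) (hi1 : 1 ≤ i) (hi2 : i ≤ n - 2)
    (t : ℝ) (ht : t ∈ Set.Icc (0:ℝ) 1) :
    (unifBD n π)[Set.indicator {X | extCoord (n-1) X (i+1) ≤ t} (fun _ => (1:ℝ)) |
        MeasurableSpace.comap (fun X (j : Fin i) => extCoord (n-1) X (j.1 + 1)) inferInstance]
      =ᵐ[unifBD n π]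
    (unifBD n π)[Set.indicator {X | extCoord (n-1) X (i+1) ≤ t} (fun _ => (1:ℝ)) |
        MeasurableSpace.comap (fun X => extCoord (n-1) X i) inferInstance] :=
  stmt_2_general n π hπ i hi1 hi2 t
end

section
/- Fix 0 ≤ x₁ ≤ α and rα ≤ x₂ ≤ (r+1)α with α, r > 0, and a ∈ [0,1]. Define L(x) = min(1 - (π(i)/π(i+1))·a, (π(i+2)/π(i+1))·(1 - x)). Then L(x₂)/L(x₁) ≥ 1 - (r+1)α, provided L(x₁) > 0. -/
/-- With `L(x) = min(1 - (π i/π (i+1))·a, (π (i+2)/π (i+1))·(1-x))`, if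
`0 ≤ x₁ ≤ α` and `rα ≤ x₂ ≤ (r+1)α`, then `L(x₂)/L(x₁) ≥ 1 - (r+1)α`,
provided `L(x₁) > 0`.  Here `p0, p1, p2` stand for `π i, π (i+1), π (i+2)`. -/
theorem stmt_7 (p0 p1 p2 : ℝ) (hp0 : 0 < p0) (hp1 : 0 < p1) (hp2 : 0 < p2)
    (a α r x₁ x₂ : ℝ) (ha0 : 0 ≤ a) (ha1 : a ≤ 1)
    (hα0 : 0 < α) (hα1 : α < 1) (hr : 0 < r) (hrα : (r+1)*α ≤ 1)
    (hx₁0 : 0 ≤ x₁) (hx₁α : x₁ ≤ α) (hx₂l : r*α ≤ x₂) (hx₂u : x₂ ≤ (r+1)*α)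
    (hpos : 0 < 1 - p0/p1 * a)
    (hL1 : 0 < min (1 - p0/p1 * a) (p2/p1 * (1 - x₁))) :
    1 - (r+1)*α ≤
      min (1 - p0/p1 * a) (p2/p1 * (1 - x₂)) / min (1 - p0/p1 * a) (p2/p1 * (1 - x₁)) := by
  rw [le_div_iff₀ hL1]
  have hK0 : 0 ≤ 1 - (r+1)*α := by linarith
  have hc : 0 < p2/p1 := div_pos hp2 hp1
  have h1 : min (1 - p0/p1 * a) (p2/p1 * (1 - x₁)) ≤ 1 - p0/p1 * a := min_le_left _ _
  have h2 : min (1 - p0/p1 * a) (p2/p1 * (1 - x₁)) ≤ p2/p1 * (1 - x₁) := min_le_right _ _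
  apply le_min
  · have := mul_le_mul_of_nonneg_right (show 1 - (r+1)*α ≤ 1 by nlinarith) hL1.le
    linarith
  · nlinarith [mul_nonneg hK0 hc.le]
end
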